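/- arXiv:2308.13377 — 5 statements merged into one kernel-verified Lean document; each statement's English description precedes it below -/
import Mathlib

section
/- For the hypergraph product matrix H_X = [A⊗I | I⊗Bᵀ], given a layer decomposition of A into k layers A_0,…,A_{k-1} and of Bᵀ into k layers B_0,…,B_{k-1}, the sets L_i = {(a,b) : ∃j, a ∈ A_j and b ∈ B_{(j+i) mod k}} for i = 0,…,k-1 form a layer decomposition of H_X into k layers; i.e., any two distinct rows of H_X in the same L_i have disjoint supports. -/
/-!
Row `(a, b)` of `H_X` is supported on `{(c, b) : A a c ≠ 0} ∪ {(a, d) : Bᵀ b d ≠ 0}`, so two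
rows `(a, b)`, `(a', b')` can only overlap when `b = b'` and rows `a`, `a'` of `A` overlap, or
`a = a'` and rows `b`, `b'` of `Bᵀ` overlap. Inside `L_i`, agreeing in `b` forces the two `a`'s into the same layer of
`A` (the shift `j ↦ j + i` is injective), and agreeing in `a` forces the two `b`'s into the same
layer of `Bᵀ`; in both cases the layer property gives disjointness. That `L_i` is a partition is
the statement that `j_B - j_A` is well defined.
-/

section Layers

variable {ι κ R : Type*} [Zero R]

def RowsDisjoint (M : ι → κ → R) (i i' : ι) : Prop :=
  ∀ col, M i col = 0 ∨ M i' col = 0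

def IsLayer (M : ι → κ → R) (S : Set ι) : Prop :=
  ∀ i ∈ S, ∀ i' ∈ S, i ≠ i' → RowsDisjoint M i i'

theorem ite_eq_zero_or_ite_eq_zero {ε : Type*} [DecidableEq ε] {d e e' : ε} {x y : R}
    (h : e = e' → x = 0 ∨ y = 0) :
    (if d = e then x else 0) = 0 ∨ (if d = e' then y else 0) = 0 := by
  by_cases he : d = e <;> by_cases he' : d = e' <;> simp_all

end Layers

section HypergraphProduct

variable {α β γ δ R : Type*} [DecidableEq α] [DecidableEq β] [Zero R]

/-- Row `(a, b)` of `[A ⊗ I | I ⊗ Bᵀ]`, with left columns `γ × β` and right columns `α × δ`. -/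
def hgpRow (A : α → γ → R) (Bt : β → δ → R) (p : α × β) : γ × β ⊕ α × δ → R :=
  Sum.elim (fun c => if c.2 = p.2 then A p.1 c.1 else 0)
    (fun c => if c.1 = p.1 then Bt p.2 c.2 else 0)

theorem hgpRow_rowsDisjoint {A : α → γ → R} {Bt : β → δ → R} {p q : α × β}
    (hA : p.2 = q.2 → RowsDisjoint A p.1 q.1) (hB : p.1 = q.1 → RowsDisjoint Bt p.2 q.2) :
    RowsDisjoint (hgpRow A Bt) p q := by
  rintro (⟨c, d⟩ | ⟨c, d⟩)
  · exact ite_eq_zero_or_ite_eq_zero fun h => hA h c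
  · exact ite_eq_zero_or_ite_eq_zero fun h => hB h d

end HypergraphProduct

section CyclicShift

variable {G α β : Type*} [AddGroup G] (LA : G → Set α) (LB : G → Set β)

def shiftLayer (i : G) : Set (α × β) :=
  {p | ∃ j, p.1 ∈ LA j ∧ p.2 ∈ LB (j + i)}

variable {LA LB}

theorem existsUnique_mem_shiftLayer (hA : ∀ a, ∃! j, a ∈ LA j) (hB : ∀ b, ∃! j, b ∈ LB j)
    (p : α × β) : ∃! i, p ∈ shiftLayer LA LB i := by
  obtain ⟨jA, hjA, huA⟩ := hA p.1
  obtain ⟨jB, hjB, huB⟩ := hB p.2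
  refine ⟨-jA + jB, ⟨jA, hjA, by rwa [add_neg_cancel_left]⟩, ?_⟩
  rintro i ⟨j, hj, hji⟩
  obtain rfl := huA j hj
  exact eq_neg_add_of_add_eq (huB _ hji)

theorem exists_mem_layer_fst_of_snd_eq (hB : ∀ b, ∃! j, b ∈ LB j) {i : G} {p q : α × β}
    (hp : p ∈ shiftLayer LA LB i) (hq : q ∈ shiftLayer LA LB i) (h : p.2 = q.2) :
    ∃ j, p.1 ∈ LA j ∧ q.1 ∈ LA j := by
  obtain ⟨j, hpj, hpji⟩ := hp
  obtain ⟨j', hqj', hqji⟩ := hq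
  rw [h] at hpji
  obtain rfl : j = j' := add_right_cancel ((hB q.2).unique hpji hqji)
  exact ⟨j, hpj, hqj'⟩

theorem exists_mem_layer_snd_of_fst_eq (hA : ∀ a, ∃! j, a ∈ LA j) {i : G} {p q : α × β}
    (hp : p ∈ shiftLayer LA LB i) (hq : q ∈ shiftLayer LA LB i) (h : p.1 = q.1) :
    ∃ j, p.2 ∈ LB j ∧ q.2 ∈ LB j := by
  obtain ⟨j, hpj, hpji⟩ := hp
  obtain ⟨j', hqj', hqji⟩ := hq
  rw [h] at hpj
  obtain rfl : j = j' := (hA q.1).unique hpj hqj'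
  exact ⟨j + i, hpji, hqji⟩

end CyclicShift

theorem isLayer_hgpRow_shiftLayer {G α β γ δ R : Type*} [AddGroup G] [DecidableEq α]
    [DecidableEq β] [Zero R] {A : α → γ → R} {Bt : β → δ → R} {LA : G → Set α}
    {LB : G → Set β} (hpartA : ∀ a, ∃! j, a ∈ LA j) (hlayerA : ∀ j, IsLayer A (LA j))
    (hpartB : ∀ b, ∃! j, b ∈ LB j) (hlayerB : ∀ j, IsLayer Bt (LB j)) (i : G) :
    IsLayer (hgpRow A Bt) (shiftLayer LA LB i) := by
  intro p hp q hq hpq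
  apply hgpRow_rowsDisjoint
  · intro h
    obtain ⟨j, hpj, hqj⟩ := exists_mem_layer_fst_of_snd_eq hpartB hp hq h
    exact hlayerA j _ hpj _ hqj fun h' => hpq (Prod.ext h' h)
  · intro h
    obtain ⟨j, hpj, hqj⟩ := exists_mem_layer_snd_of_fst_eq hpartA hp hq h
    exact hlayerB j _ hpj _ hqj fun h' => hpq (Prod.ext h h')

/-- The cyclic-shift construction L_i = {(a,b) : ∃ j, a ∈ A_j, b ∈ B_{j+i}} turns
layer decompositions of A and Bᵀ into a layer decomposition of
H_X = [A⊗I | I⊗Bᵀ] into k layers. -/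
theorem hgp_layer_decomposition (mA nA mB nB k : ℕ) [NeZero k]
    (A : Fin mA → Fin nA → ZMod 2) (Bt : Fin mB → Fin nB → ZMod 2)
    (LA : Fin k → Set (Fin mA)) (LB : Fin k → Set (Fin mB))
    (hpartA : ∀ a, ∃! j, a ∈ LA j)
    (hlayerA : ∀ j, ∀ a ∈ LA j, ∀ a' ∈ LA j, a ≠ a' → ∀ col, A a col = 0 ∨ A a' col = 0)
    (hpartB : ∀ b, ∃! j, b ∈ LB j)
    (hlayerB : ∀ j, ∀ b ∈ LB j, ∀ b' ∈ LB j, b ≠ b' → ∀ col, Bt b col = 0 ∨ Bt b' col = 0)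
    (HX : Fin mA × Fin mB → (Fin nA × Fin mB ⊕ Fin mA × Fin nB) → ZMod 2)
    (hHX : ∀ a b col, HX (a, b) col =
      Sum.elim (fun p : Fin nA × Fin mB => if p.2 = b then A a p.1 else 0)
               (fun p : Fin mA × Fin nB => if p.1 = a then Bt b p.2 else 0) col)
    (L : Fin k → Set (Fin mA × Fin mB))
    (hL : ∀ i p, p ∈ L i ↔ ∃ j, p.1 ∈ LA j ∧ p.2 ∈ LB (j + i)) :
    (∀ p, ∃! i, p ∈ L i) ∧
    (∀ i, ∀ p ∈ L i, ∀ q ∈ L i, p ≠ q → ∀ col, HX p col = 0 ∨ HX q col = 0) := by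
  obtain rfl : L = shiftLayer LA LB := funext fun i => Set.ext (hL i)
  obtain rfl : HX = hgpRow A Bt := funext fun p => funext (hHX p.1 p.2)
  exact ⟨existsUnique_mem_shiftLayer hpartA hpartB,
    isLayer_hgpRow_shiftLayer hpartA hlayerA hpartB hlayerB⟩
end

section
/- If the hypergraph product matrix H_X = [A⊗I | I⊗Bᵀ] admits a layer decomposition into k layers, then the matrix A admits a layer decomposition into at most k layers, obtained by restricting each layer to the rows {(a,b₀) : a a row of A} for any fixed row b₀ of Bᵀ. Consequently, k ≥ k_A, the minimal number of layers for A. -/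
/-! The rows `(a, b₀)` and columns `inl (c, b₀)` of `H_X` cut out a copy of `A` from the block
`A ⊗ I`, and passing to a submatrix along an injective row map turns layers into layers. -/

open Function

namespace Matrix

variable {R C R' C' α : Type*} [Zero α]

def IsLayer (M : Matrix R C α) (S : Set R) : Prop :=
  ∀ p ∈ S, ∀ q ∈ S, p ≠ q → ∀ c, M p c = 0 ∨ M q c = 0

def IsLayerDecomposition {k : ℕ} (M : Matrix R C α) (L : Fin k → Set R) : Prop :=
  (∀ r, ∃! i, r ∈ L i) ∧ ∀ i, M.IsLayer (L i)

/-- The paper's `k_M`. -/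
noncomputable def layerNumber (M : Matrix R C α) : ℕ :=
  sInf {k | ∃ L : Fin k → Set R, M.IsLayerDecomposition L}

theorem IsLayer.submatrix {M : Matrix R C α} {S : Set R} (hS : M.IsLayer S)
    {f : R' → R} (hf : Injective f) (g : C' → C) : (M.submatrix f g).IsLayer (f ⁻¹' S) :=
  fun _ hp _ hq hne c => hS _ hp _ hq (hf.ne hne) (g c)

theorem IsLayerDecomposition.submatrix {k : ℕ} {M : Matrix R C α} {L : Fin k → Set R}
    (hL : M.IsLayerDecomposition L) {f : R' → R} (hf : Injective f) (g : C' → C) :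
    (M.submatrix f g).IsLayerDecomposition (fun i => f ⁻¹' L i) :=
  ⟨fun r => hL.1 (f r), fun i => (hL.2 i).submatrix hf g⟩

theorem IsLayerDecomposition.layerNumber_le {k : ℕ} {M : Matrix R C α} {L : Fin k → Set R}
    (hL : M.IsLayerDecomposition L) : M.layerNumber ≤ k :=
  Nat.sInf_le ⟨L, hL⟩

end Matrix

/-- Restricting a k-layer decomposition of H_X = [A⊗I | I⊗Bᵀ] to the rows
{(a,b₀)} gives a layer decomposition of A into at most k layers; consequently
k is at least the minimal number of layers k_A of A. -/
theorem hgp_layers_restrict_to_A (mA nA mB nB k : ℕ)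
    (A : Fin mA → Fin nA → ZMod 2) (Bt : Fin mB → Fin nB → ZMod 2)
    (HX : Fin mA × Fin mB → (Fin nA × Fin mB ⊕ Fin mA × Fin nB) → ZMod 2)
    (hHX : ∀ a b col, HX (a, b) col =
      Sum.elim (fun p : Fin nA × Fin mB => if p.2 = b then A a p.1 else 0)
               (fun p : Fin mA × Fin nB => if p.1 = a then Bt b p.2 else 0) col)
    (L : Fin k → Set (Fin mA × Fin mB))
    (hpart : ∀ p, ∃! i, p ∈ L i)
    (hlayer : ∀ i, ∀ p ∈ L i, ∀ q ∈ L i, p ≠ q → ∀ col, HX p col = 0 ∨ HX q col = 0)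
    (b₀ : Fin mB) :
    (∀ a : Fin mA, ∃! i : Fin k, (a, b₀) ∈ L i) ∧
    (∀ i : Fin k, ∀ a : Fin mA, (a, b₀) ∈ L i → ∀ a' : Fin mA, (a', b₀) ∈ L i →
      a ≠ a' → ∀ col, A a col = 0 ∨ A a' col = 0) ∧
    sInf {k' : ℕ | ∃ LA : Fin k' → Set (Fin mA),
        (∀ a, ∃! i, a ∈ LA i) ∧
        ∀ i, ∀ a ∈ LA i, ∀ a' ∈ LA i, a ≠ a' → ∀ col, A a col = 0 ∨ A a' col = 0} ≤ k := by
  have hblock :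
      Matrix.of A = (Matrix.of HX).submatrix (fun a => (a, b₀)) (fun col => Sum.inl (col, b₀)) := by
    ext a col
    simp [hHX]
  have hdec : (Matrix.of HX).IsLayerDecomposition L := ⟨hpart, hlayer⟩
  have hdecA : (Matrix.of A).IsLayerDecomposition (fun i => {a | (a, b₀) ∈ L i}) :=
    hblock ▸ hdec.submatrix (Prod.mk_left_injective b₀) _
  exact ⟨hdecA.1, hdecA.2, hdecA.layerNumber_le⟩
end

section
/- If the hypergraph product matrix H_X = [A⊗I | I⊗Bᵀ] admits a layer decomposition into k layers, then Bᵀ admits a layer decomposition into at most k layers; hence the minimal number of layers of H_X equals max(k_A, k_{Bᵀ}), where k_A and k_{Bᵀ} are the minimal numbers of layers of A and Bᵀ respectively. -/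
/-- A layer decomposition of a matrix `H` (rows `R`, columns `C`, over F₂)
into `k` layers. -/
def IsLayerDecomp {R C : Type*} (H : R → C → ZMod 2) (k : ℕ)
    (L : Fin k → Set R) : Prop :=
  (∀ r, ∃! i, r ∈ L i) ∧
  ∀ i, ∀ r ∈ L i, ∀ r' ∈ L i, r ≠ r' → ∀ c, H r c = 0 ∨ H r' c = 0

/-- Minimal number of layers of a layer decomposition of `H`. -/
noncomputable def minLayers {R C : Type*} (H : R → C → ZMod 2) : ℕ :=
  sInf {k | ∃ L : Fin k → Set R, IsLayerDecomp H k L}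

/-!
Restricting `H_X` to the rows `{a₀} × R_B` and the right-block columns `{a₀} × C_B` gives a
copy of `Bᵀ`, and restricting to `R_A × {b₀}` and `C_A × {b₀}` gives a copy of `A`; so every
layering of `H_X` induces layerings of `A` and `Bᵀ` with as many layers. Conversely, given
layer assignments `φ_A`, `φ_B` of `A` and `Bᵀ` into `ℤ/n`, the assignment
`(a, b) ↦ φ_A a + φ_B b` layers `H_X`: two rows meeting in a left-block column share their `b`,
hence lie in the same layer of `A`, and symmetrically for the right block.
-/

open Function

/-- A layer decomposition, recorded as the map sending each row to its layer. -/
def IsLayerColoring {R C : Type*} {k : ℕ} (H : R → C → ZMod 2) (φ : R → Fin k) : Prop :=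
  ∀ r r', r ≠ r' → φ r = φ r' → ∀ c, H r c = 0 ∨ H r' c = 0

section Coloring

variable {R C : Type*} {k : ℕ} {H : R → C → ZMod 2}

theorem exists_isLayerDecomp_iff (H : R → C → ZMod 2) (k : ℕ) :
    (∃ L, IsLayerDecomp H k L) ↔ ∃ φ : R → Fin k, IsLayerColoring H φ := by
  constructor
  · rintro ⟨L, hcover, hdisj⟩
    choose φ hφ _ using hcover
    exact ⟨φ, fun r r' hne heq => hdisj (φ r) r (hφ r) r' (heq ▸ hφ r') hne⟩
  · rintro ⟨φ, hφ⟩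
    exact ⟨fun i => {r | φ r = i}, fun r => ⟨φ r, rfl, fun _ hj => hj.symm⟩,
      fun _ r hr r' hr' hne => hφ r r' hne (hr.trans hr'.symm)⟩

theorem minLayers_le {φ : R → Fin k} (hφ : IsLayerColoring H φ) : minLayers H ≤ k :=
  Nat.sInf_le ((exists_isLayerDecomp_iff H k).2 ⟨φ, hφ⟩)

theorem exists_isLayerColoring_minLayers {φ : R → Fin k} (hφ : IsLayerColoring H φ) :
    ∃ ψ : R → Fin (minLayers H), IsLayerColoring H ψ :=
  (exists_isLayerDecomp_iff H _).1 <| Nat.sInf_mem (s := {k | ∃ L, IsLayerDecomp H k L})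
    ⟨k, (exists_isLayerDecomp_iff H k).2 ⟨φ, hφ⟩⟩

theorem IsLayerColoring.comp {R' C' : Type*} {H' : R' → C' → ZMod 2} {φ : R → Fin k}
    (hφ : IsLayerColoring H φ) {f : R' → R} (hf : Injective f) (g : C' → C)
    (hH : ∀ r c, H' r c = H (f r) (g c)) : IsLayerColoring H' (φ ∘ f) := by
  intro r r' hne heq c
  rw [hH, hH]
  exact hφ (f r) (f r') (hf.ne hne) heq (g c)

theorem IsLayerColoring.castLE {n : ℕ} {φ : R → Fin k} (hφ : IsLayerColoring H φ)
    (hkn : k ≤ n) : IsLayerColoring H (Fin.castLE hkn ∘ φ) :=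
  fun r r' hne heq => hφ r r' hne (Fin.castLE_injective hkn heq)

end Coloring

/-- The hypergraph-product check matrix `H_X = [A ⊗ I | I ⊗ Bᵀ]`, with rows indexed by
`R_A × R_B` and columns by `C_A × R_B ⊕ R_A × C_B`. -/
def hgpMatrix {RA CA RB CB : Type*} [DecidableEq RA] [DecidableEq RB]
    (A : RA → CA → ZMod 2) (Bt : RB → CB → ZMod 2) :
    RA × RB → (CA × RB ⊕ RA × CB) → ZMod 2 :=
  fun r => Sum.elim (fun p => if p.2 = r.2 then A r.1 p.1 else 0)
    (fun p => if p.1 = r.1 then Bt r.2 p.2 else 0)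

section HypergraphProduct

variable {RA CA RB CB : Type*} [DecidableEq RA] [DecidableEq RB]
  {A : RA → CA → ZMod 2} {Bt : RB → CB → ZMod 2} {n : ℕ}

theorem IsLayerColoring.hgpMatrix_left {φ : RA × RB → Fin n}
    (hφ : IsLayerColoring (hgpMatrix A Bt) φ) (b : RB) :
    IsLayerColoring A (φ ∘ (·, b)) :=
  hφ.comp (Prod.mk_left_injective b) (fun j => Sum.inl (j, b)) fun _ _ => by simp [hgpMatrix]

theorem IsLayerColoring.hgpMatrix_right {φ : RA × RB → Fin n}
    (hφ : IsLayerColoring (hgpMatrix A Bt) φ) (a : RA) :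
    IsLayerColoring Bt (φ ∘ (a, ·)) :=
  hφ.comp (Prod.mk_right_injective a) (fun j => Sum.inr (a, j)) fun _ _ => by simp [hgpMatrix]

theorem IsLayerColoring.hgpMatrix_add [NeZero n] {φA : RA → Fin n} {φB : RB → Fin n}
    (hA : IsLayerColoring A φA) (hB : IsLayerColoring Bt φB) :
    IsLayerColoring (hgpMatrix A Bt) fun r => φA r.1 + φB r.2 := by
  rintro ⟨a, b⟩ ⟨a', b'⟩ hne heq (⟨j, b''⟩ | ⟨a'', j⟩)
  · by_cases hb : b'' = b
    · by_cases hb' : b'' = b'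
      · subst hb hb'
        have hA' := hA a a' (fun h => hne (by rw [h])) (add_right_cancel heq) j
        simpa [hgpMatrix] using hA'
      · simp [hgpMatrix, hb']
    · simp [hgpMatrix, hb]
  · by_cases ha : a'' = a
    · by_cases ha' : a'' = a'
      · subst ha ha'
        have hB' := hB b b' (fun h => hne (by rw [h])) (add_left_cancel heq) j
        simpa [hgpMatrix] using hB'
      · simp [hgpMatrix, ha']
    · simp [hgpMatrix, ha]

end HypergraphProduct

/-- If H_X = [A⊗I | I⊗Bᵀ] admits a layer decomposition into k layers, then Bᵀ
admits a layer decomposition into at most k layers; hence the minimal number of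
layers of H_X equals max(k_A, k_{Bᵀ}). -/
theorem hgp_min_layers (mA nA mB nB k : ℕ) (hmA : 0 < mA) (hmB : 0 < mB)
    (A : Fin mA → Fin nA → ZMod 2) (Bt : Fin mB → Fin nB → ZMod 2)
    (HX : Fin mA × Fin mB → (Fin nA × Fin mB ⊕ Fin mA × Fin nB) → ZMod 2)
    (hHX : ∀ a b col, HX (a, b) col =
      Sum.elim (fun p : Fin nA × Fin mB => if p.2 = b then A a p.1 else 0)
               (fun p : Fin mA × Fin nB => if p.1 = a then Bt b p.2 else 0) col)
    (L : Fin k → Set (Fin mA × Fin mB))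
    (hL : IsLayerDecomp HX k L) :
    (∃ LB : Fin k → Set (Fin mB), IsLayerDecomp Bt k LB) ∧
    minLayers HX = max (minLayers A) (minLayers Bt) := by
  obtain rfl : HX = hgpMatrix A Bt := funext fun r => funext (hHX r.1 r.2)
  let a₀ : Fin mA := ⟨0, hmA⟩
  let b₀ : Fin mB := ⟨0, hmB⟩
  obtain ⟨φ, hφ⟩ := (exists_isLayerDecomp_iff _ k).1 ⟨L, hL⟩
  refine ⟨(exists_isLayerDecomp_iff Bt k).2 ⟨_, hφ.hgpMatrix_right a₀⟩,
    le_antisymm ?_ ?_⟩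
  · obtain ⟨ψA, hψA⟩ := exists_isLayerColoring_minLayers (hφ.hgpMatrix_left b₀)
    obtain ⟨ψB, hψB⟩ := exists_isLayerColoring_minLayers (hφ.hgpMatrix_right a₀)
    have : NeZero (max (minLayers A) (minLayers Bt)) :=
      ⟨(lt_max_of_lt_left (ψA a₀).pos).ne'⟩
    exact minLayers_le
      ((hψA.castLE (le_max_left _ _)).hgpMatrix_add (hψB.castLE (le_max_right _ _)))
  · obtain ⟨ψ, hψ⟩ := exists_isLayerColoring_minLayers hφ
    exact max_le (minLayers_le (hψ.hgpMatrix_left b₀))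
      (minLayers_le (hψ.hgpMatrix_right a₀))
end

section
/- Let a_0 ≥ … ≥ a_{k-1} > 0 and b_0 ≥ … ≥ b_{k-1} > 0 with a_0 = α·a_{k-1} and b_0 = β·b_{k-1}. Then for all indices l, j: (∑_i a_i b_{(i+l) mod k}) / (∑_i a_i b_{(i+j) mod k}) ≤ min(α, β). In particular, the product layer decomposition of H_X with layer sizes |L_l| = ∑_i a_i b_{(i+l) mod k} is min(α,β)-balanced. -/
/-! Every shifted sum `∑ i, a i * b (i + m)` lies between `a_{k-1} ∑ b` and `a_0 ∑ b = α a_{k-1} ∑ b`,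
and likewise between `b_{k-1} ∑ a` and `β b_{k-1} ∑ a`; two numbers in an interval `[lo, c lo]`
have ratio at most `c`. -/

open Finset Set

lemma sum_mul_mem_Icc_mul_sum {ι : Type*} (s : Finset ι) {f w : ι → ℝ} {lo hi : ℝ}
    (hf : ∀ i ∈ s, f i ∈ Icc lo hi) (hw : ∀ i ∈ s, 0 ≤ w i) :
    ∑ i ∈ s, f i * w i ∈ Icc (lo * ∑ i ∈ s, w i) (hi * ∑ i ∈ s, w i) := by
  rw [Finset.mul_sum, Finset.mul_sum]
  exact ⟨sum_le_sum fun i hi => mul_le_mul_of_nonneg_right (hf i hi).1 (hw i hi),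
    sum_le_sum fun i hi => mul_le_mul_of_nonneg_right (hf i hi).2 (hw i hi)⟩

lemma div_le_of_forall_mem_Icc {ι : Type*} {S : ι → ℝ} {lo c : ℝ} (hlo : 0 < lo)
    (hS : ∀ m, S m ∈ Icc lo (c * lo)) (l j : ι) : S l / S j ≤ c := by
  have hc : 0 ≤ c := by nlinarith [(hS l).1, (hS l).2]
  rw [div_le_iff₀ (hlo.trans_le (hS j).1)]
  calc S l ≤ c * lo := (hS l).2
    _ ≤ c * S j := mul_le_mul_of_nonneg_left (hS j).1 hc

lemma Fin.antitone_mem_Icc {k : ℕ} (hk : 0 < k) {a : Fin k → ℝ} (ha : Antitone a) (i : Fin k) :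
    a i ∈ Icc (a ⟨k - 1, Nat.sub_one_lt_of_lt hk⟩) (a ⟨0, hk⟩) :=
  ⟨ha (Fin.le_def.2 (by simp only; omega)), ha (Fin.le_def.2 (Nat.zero_le _))⟩

/-- If a₀ = α·a_{k-1} and b₀ = β·b_{k-1} for decreasing positive sequences,
then any two cyclic-shift sums have ratio at most min(α,β): the product layer
decomposition is min(α,β)-balanced. -/
theorem hgp_balanced (k : ℕ) (hk : 0 < k) (a b : Fin k → ℝ) (α β : ℝ)
    (ha : ∀ i j : Fin k, i ≤ j → a j ≤ a i)
    (hb : ∀ i j : Fin k, i ≤ j → b j ≤ b i)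
    (hapos : ∀ i, 0 < a i) (hbpos : ∀ i, 0 < b i)
    (hα : a ⟨0, hk⟩ = α * a ⟨k - 1, by omega⟩)
    (hβ : b ⟨0, hk⟩ = β * b ⟨k - 1, by omega⟩) :
    ∀ l j : Fin k,
      (∑ i, a i * b (i + l)) / (∑ i, a i * b (i + j)) ≤ min α β := by
  have : NeZero k := ⟨hk.ne'⟩
  intro l j
  have hshift (m : Fin k) : ∑ i, b (i + m) = ∑ i, b i := Equiv.sum_comp (Equiv.addRight m) b
  have hα_bound (m : Fin k) : ∑ i, a i * b (i + m) ∈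
      Icc (a ⟨k - 1, by omega⟩ * ∑ i, b i) (α * (a ⟨k - 1, by omega⟩ * ∑ i, b i)) := by
    rw [← mul_assoc, ← hα, ← hshift m]
    exact sum_mul_mem_Icc_mul_sum _ (fun i _ => Fin.antitone_mem_Icc hk ha i)
      (fun i _ => (hbpos _).le)
  have hβ_bound (m : Fin k) : ∑ i, a i * b (i + m) ∈
      Icc (b ⟨k - 1, by omega⟩ * ∑ i, a i) (β * (b ⟨k - 1, by omega⟩ * ∑ i, a i)) := by
    simp_rw [← mul_assoc, ← hβ, mul_comm (a _)]
    exact sum_mul_mem_Icc_mul_sum _ (fun i _ => Fin.antitone_mem_Icc hk hb (i + m))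
      (fun i _ => (hapos i).le)
  have hsum_pos (c : Fin k → ℝ) (hc : ∀ i, 0 < c i) : 0 < ∑ i, c i :=
    sum_pos (fun i _ => hc i) univ_nonempty
  exact le_min
    (div_le_of_forall_mem_Icc (mul_pos (hapos _) (hsum_pos b hbpos)) hα_bound l j)
    (div_le_of_forall_mem_Icc (mul_pos (hbpos _) (hsum_pos a hapos)) hβ_bound l j)
end

section
/- For the 63×63 quasi-cyclic matrix whose row i has support {i, i+1, i+6} mod 63 (from polynomial 1 + x + x⁶), the sets S_l = {l + 7j : 0 ≤ j ≤ 8} for l = 0,…,6 form a layer decomposition into 7 layers, and moreover for each l, S_l ∪ S_{(l+3) mod 7} is itself a valid layer (any two rows in the union have disjoint supports). -/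
/-!
Row `i` is the translate `i + D` of `D = {0, 1, 6}` in `ℤ/63`, and two translates `i + D`,
`j + D` with `i ≠ j` can only meet when `j - i` is a nonzero difference of `D`, i.e. one
of `±1, ±5, ±6`. Since `7 ∣ 63`, reduction mod 7 is additive on `ℤ/63`; it sends these
differences to `{1, 2, 5, 6}`, whereas two rows of `S_l ∪ S_{l+3}` differ by `0` or `±3`
mod 7.
-/

open Pointwise

section Translates

variable {G : Type*} [AddCommGroup G] [DecidableEq G] {D : Finset G} {i j : G}

theorem Finset.sub_mem_erase_zero_of_not_disjoint_vadd (hij : i ≠ j)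
    (h : ¬Disjoint (i +ᵥ D) (j +ᵥ D)) : j - i ∈ (D - D).erase 0 := by
  obtain ⟨x, hxi, hxj⟩ := Finset.not_disjoint_iff.mp h
  obtain ⟨a, ha, rfl⟩ := Finset.mem_vadd_finset.mp hxi
  obtain ⟨b, hb, hab⟩ := Finset.mem_vadd_finset.mp hxj
  refine Finset.mem_erase.mpr
    ⟨sub_ne_zero.mpr hij.symm, Finset.mem_sub.mpr ⟨a, ha, b, hb, ?_⟩⟩
  rw [sub_eq_sub_iff_add_eq_add, add_comm a, ← vadd_eq_add, ← vadd_eq_add, ← hab, vadd_eq_add,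
    add_comm]

theorem Finset.disjoint_vadd_of_map_sub_notMem {H : Type*} [AddCommGroup H] [DecidableEq H]
    (f : G →+ H) (hij : i ≠ j) (h : f j - f i ∉ ((D - D).erase 0).image f) :
    Disjoint (i +ᵥ D) (j +ᵥ D) := by
  by_contra hD
  exact h (map_sub f j i ▸
    Finset.mem_image_of_mem f (sub_mem_erase_zero_of_not_disjoint_vadd hij hD))

end Translates

def finModHom {m n : ℕ} [NeZero m] [NeZero n] (h : m ∣ n) : Fin n →+ Fin m where
  toFun r := Fin.ofNat m r
  map_zero' := by ext; simp
  map_add' a b := by ext; simp [Fin.val_add, Nat.mod_mod_of_dvd _ h, Nat.add_mod]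

/-- For the 63×63 quasi-cyclic matrix with row supports {i, i+1, i+6} mod 63,
the residue classes S_l = {r : r ≡ l mod 7} form a 7-layer decomposition, and
each union S_l ∪ S_{l+3} is still a valid layer. -/
theorem b1_base_layers :
    ∀ s : Fin 63 → Finset (Fin 63), (∀ i, s i = {i, i + 1, i + 6}) →
    ∀ S : Fin 7 → Finset (Fin 63),
      (∀ l, S l = Finset.univ.filter fun r : Fin 63 => (r : ℕ) % 7 = (l : ℕ)) →
    (∀ r : Fin 63, ∃! l, r ∈ S l) ∧
    (∀ l, ∀ i ∈ S l, ∀ j ∈ S l, i ≠ j → Disjoint (s i) (s j)) ∧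
    (∀ l, ∀ i ∈ S l ∪ S (l + 3), ∀ j ∈ S l ∪ S (l + 3), i ≠ j →
      Disjoint (s i) (s j)) := by
  intro s hs S hS
  set D : Finset (Fin 63) := {0, 1, 6}
  set ρ := finModHom (by norm_num : 7 ∣ 63)
  have hs_vadd : ∀ i, s i = i +ᵥ D := fun i => by simp [hs, D, Finset.vadd_finset_insert]
  have hmem : ∀ r l, r ∈ S l ↔ ρ r = l := fun r l => by simp [hS, ρ, finModHom, Fin.ext_iff]
  have hdiff : ∀ l : Fin 7, ∀ a ∈ ({l, l + 3} : Finset (Fin 7)),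
      ∀ b ∈ ({l, l + 3} : Finset (Fin 7)), b - a ∉ ((D - D).erase 0).image ρ := by decide
  have hunion : ∀ l, ∀ i ∈ S l ∪ S (l + 3), ∀ j ∈ S l ∪ S (l + 3), i ≠ j →
      Disjoint (s i) (s j) := by
    intro l i hi j hj hij
    rw [hs_vadd, hs_vadd]
    refine Finset.disjoint_vadd_of_map_sub_notMem ρ hij (hdiff l _ ?_ _ ?_)
    · simpa [hmem] using hi
    · simpa [hmem] using hj
  refine ⟨fun r => ⟨ρ r, (hmem r _).2 rfl, fun l hl => ((hmem r l).1 hl).symm⟩,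
    fun l i hi j hj => hunion l i (Finset.mem_union_left _ hi) j (Finset.mem_union_left _ hj),
    hunion⟩
end
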